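/- arXiv:1608.08010 — 14 statements merged into one kernel-verified Lean document; each statement's English description precedes it below -/
import Mathlib

section
/- The 5-dimensional KdV map φ(v₀,v₁,v₂,v₃,v₄) = (v₁,v₂,v₃,v₄,v₅), where v₅ is determined by v₂ - v₃ = 1/v₀ - 1/v₅ (i.e. v₅ = -v₀/(v₀v₂ - v₀v₃ - 1)), preserves the function I₁ = 1/v₀ + 1/v₁ + 1/v₂ + 1/v₃ + 1/v₄ - v₂, i.e. I₁(v₁,...,v₅) = I₁(v₀,...,v₄). -/
/-!
The defining relation of `v₅` is the reduced lattice KdV equation `v₂ - v₃ = 1/v₀ - 1/v₅`.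
Shifting `I₁` replaces `1/v₀ - v₂` by `1/v₅ - v₃`, and these agree by that very relation.
-/

theorem one_div_kdv_next {K : Type*} [Field K] {v0 : K} (v2 v3 : K) (h0 : v0 ≠ 0) :
    1 / (-v0 / (v0 * v2 - v0 * v3 - 1)) = 1 / v0 - (v2 - v3) := by
  rw [one_div_div, div_neg]
  field_simp
  ring

theorem kdv_map_preserves_I1_general (v0 v1 v2 v3 v4 : ℝ)
    (h0 : v0 ≠ 0)
    (v5 : ℝ) (hv5 : v5 = -v0 / (v0 * v2 - v0 * v3 - 1)) :
    1/v1 + 1/v2 + 1/v3 + 1/v4 + 1/v5 - v3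
      = 1/v0 + 1/v1 + 1/v2 + 1/v3 + 1/v4 - v2 := by
  rw [hv5, one_div_kdv_next v2 v3 h0]
  ring

/-- The (3,-2) reduction of lattice KdV preserves I₁. -/
theorem kdv_map_preserves_I1 (v0 v1 v2 v3 v4 : ℝ)
    (h0 : v0 ≠ 0) (h1 : v1 ≠ 0) (h2 : v2 ≠ 0) (h3 : v3 ≠ 0) (h4 : v4 ≠ 0)
    (hden : v0 * v2 - v0 * v3 - 1 ≠ 0)
    (v5 : ℝ) (hv5 : v5 = -v0 / (v0 * v2 - v0 * v3 - 1)) :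
    1/v1 + 1/v2 + 1/v3 + 1/v4 + 1/v5 - v3
      = 1/v0 + 1/v1 + 1/v2 + 1/v3 + 1/v4 - v2 :=
  kdv_map_preserves_I1_general v0 v1 v2 v3 v4 h0 v5 hv5
end

section
/- The 5-dimensional KdV map φ(v₀,...,v₄) = (v₁,...,v₄, -v₀/(v₀v₂ - v₀v₃ - 1)) preserves the function I₂ = (v₂v₄ - 1)(v₁v₃ - 1)(v₀v₂ - 1)/(v₀v₁v₂v₃v₄). -/
/-!
With `D = v₀v₂ - v₀v₃ - 1` and `v₅ = -v₀ / D` one finds `v₃v₅ - 1 = -(v₀v₂ - 1) / D`, so the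
factor `(v₃v₅ - 1) / v₅` that the shift brings into `I₂` equals the factor `(v₀v₂ - 1) / v₀`
that it removes; the other factors of `I₂` are common to both sides.
-/

section

variable {K : Type*} [Field K]

/-- The last coordinate of the KdV map. -/
def kdvNext (v0 v2 v3 : K) : K :=
  -v0 / (v0 * v2 - v0 * v3 - 1)

theorem mul_kdvNext_sub_one {v0 v2 v3 : K} (hden : v0 * v2 - v0 * v3 - 1 ≠ 0) :
    v3 * kdvNext v0 v2 v3 - 1 = -(v0 * v2 - 1) / (v0 * v2 - v0 * v3 - 1) := by
  rw [kdvNext, eq_div_iff hden, sub_mul, mul_assoc, div_mul_cancel₀ _ hden]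
  ring

theorem mul_kdvNext_sub_one_div {v0 v2 v3 : K} (hden : v0 * v2 - v0 * v3 - 1 ≠ 0) :
    (v3 * kdvNext v0 v2 v3 - 1) / kdvNext v0 v2 v3 = (v0 * v2 - 1) / v0 := by
  rw [mul_kdvNext_sub_one hden, kdvNext, div_div_div_cancel_right₀ hden, neg_div_neg_eq]

end

theorem kdv_map_preserves_I2_general (v0 v1 v2 v3 v4 : ℝ)
    (hden : v0 * v2 - v0 * v3 - 1 ≠ 0)
    (v5 : ℝ) (hv5 : v5 = -v0 / (v0 * v2 - v0 * v3 - 1)) :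
    (v3 * v5 - 1) * (v2 * v4 - 1) * (v1 * v3 - 1) / (v1 * v2 * v3 * v4 * v5)
      = (v2 * v4 - 1) * (v1 * v3 - 1) * (v0 * v2 - 1) / (v0 * v1 * v2 * v3 * v4) := by
  have hv5 : v5 = kdvNext v0 v2 v3 := hv5
  set common := (v2 * v4 - 1) * (v1 * v3 - 1) / (v1 * v2 * v3 * v4)
  calc (v3 * v5 - 1) * (v2 * v4 - 1) * (v1 * v3 - 1) / (v1 * v2 * v3 * v4 * v5)
      = (v3 * v5 - 1) / v5 * common := by ring
    _ = (v0 * v2 - 1) / v0 * common := by rw [hv5, mul_kdvNext_sub_one_div hden]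
    _ = (v2 * v4 - 1) * (v1 * v3 - 1) * (v0 * v2 - 1) / (v0 * v1 * v2 * v3 * v4) := by ring

/-- The (3,-2) reduction of lattice KdV preserves I₂. -/
theorem kdv_map_preserves_I2 (v0 v1 v2 v3 v4 : ℝ)
    (h0 : v0 ≠ 0) (h1 : v1 ≠ 0) (h2 : v2 ≠ 0) (h3 : v3 ≠ 0) (h4 : v4 ≠ 0)
    (hden : v0 * v2 - v0 * v3 - 1 ≠ 0)
    (v5 : ℝ) (hv5 : v5 = -v0 / (v0 * v2 - v0 * v3 - 1)) :
    (v3 * v5 - 1) * (v2 * v4 - 1) * (v1 * v3 - 1) / (v1 * v2 * v3 * v4 * v5)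
      = (v2 * v4 - 1) * (v1 * v3 - 1) * (v0 * v2 - 1) / (v0 * v1 * v2 * v3 * v4) :=
  kdv_map_preserves_I2_general v0 v1 v2 v3 v4 hden v5 hv5
end

section
/- The 5-dimensional KdV map φ(v₀,...,v₄) = (v₁,...,v₄, -v₀/(v₀v₂ - v₀v₃ - 1)) preserves the function I₃ = (v₁v₄ + 1)(v₀v₃ + 1)/(v₀v₁v₂v₃v₄). -/
/-!
Writing `v₅ = -v₀ / (v₀v₂ - v₀v₃ - 1)`, one has `v₂v₅ + 1 = -(v₀v₃ + 1) / (v₀v₂ - v₀v₃ - 1)`, so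
`(v₂v₅ + 1) / v₅ = (v₀v₃ + 1) / v₀`. Both sides of the invariance identity are
`(v₁v₄ + 1) / (v₁v₂v₃v₄)` times one of these two ratios.
-/

theorem kdv_shift_ratio_eq {K : Type*} [Field K] {v0 v2 v3 v5 : K}
    (hden : v0 * v2 - v0 * v3 - 1 ≠ 0) (hv5 : v5 = -v0 / (v0 * v2 - v0 * v3 - 1)) :
    (v2 * v5 + 1) / v5 = (v0 * v3 + 1) / v0 := by
  rcases eq_or_ne v0 0 with rfl | h0
  · simp [hv5] -- then `v5 = 0`, and both sides are `_ / 0 = 0`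
  · have h5 : v5 ≠ 0 := hv5 ▸ div_ne_zero (neg_ne_zero.mpr h0) hden
    have hcleared : v5 * (v0 * v2 - v0 * v3 - 1) = -v0 := by rw [hv5, div_mul_cancel₀ _ hden]
    rw [div_eq_div_iff h5 h0]
    linear_combination hcleared

theorem kdv_map_preserves_I3_general (v0 v1 v2 v3 v4 : ℝ)
    (hden : v0 * v2 - v0 * v3 - 1 ≠ 0)
    (v5 : ℝ) (hv5 : v5 = -v0 / (v0 * v2 - v0 * v3 - 1)) :
    (v2 * v5 + 1) * (v1 * v4 + 1) / (v1 * v2 * v3 * v4 * v5)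
      = (v1 * v4 + 1) * (v0 * v3 + 1) / (v0 * v1 * v2 * v3 * v4) := by
  calc _ = (v1 * v4 + 1) / (v1 * v2 * v3 * v4) * ((v2 * v5 + 1) / v5) := by
        rw [div_mul_div_comm]; ring
    _ = (v1 * v4 + 1) / (v1 * v2 * v3 * v4) * ((v0 * v3 + 1) / v0) := by
        rw [kdv_shift_ratio_eq hden hv5]
    _ = _ := by
        rw [div_mul_div_comm]; ring

/-- The (3,-2) reduction of lattice KdV preserves I₃. -/
theorem kdv_map_preserves_I3 (v0 v1 v2 v3 v4 : ℝ)
    (h0 : v0 ≠ 0) (h1 : v1 ≠ 0) (h2 : v2 ≠ 0) (h3 : v3 ≠ 0) (h4 : v4 ≠ 0)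
    (hden : v0 * v2 - v0 * v3 - 1 ≠ 0)
    (v5 : ℝ) (hv5 : v5 = -v0 / (v0 * v2 - v0 * v3 - 1)) :
    (v2 * v5 + 1) * (v1 * v4 + 1) / (v1 * v2 * v3 * v4 * v5)
      = (v1 * v4 + 1) * (v0 * v3 + 1) / (v0 * v1 * v2 * v3 * v4) :=
  kdv_map_preserves_I3_general v0 v1 v2 v3 v4 hden v5 hv5
end

section
/- Let Ω be the 5×5 skew-symmetric matrix with entries Ω₁₃ = -v₀²v₂², Ω₁₄ = v₀²v₃², Ω₁₅ = v₀²v₂²v₄², Ω₂₄ = -v₁²v₃², Ω₂₅ = v₁²v₄², Ω₃₅ = -v₂²v₄², (and Ω_{ji} = -Ω_{ij}, all other entries zero). Then Ω satisfies the Jacobi identity ∑_l (Ω_{li} ∂_l Ω_{jk} + Ω_{lj} ∂_l Ω_{ki} + Ω_{lk} ∂_l Ω_{ij}) = 0 for all i,j,k, hence defines a Poisson bracket on ℝ⁵. -/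
/-!
The entries of `kdvOmega` are polynomials in the coordinates, and on polynomial functions the
coordinate derivative `pd l` is evaluation of the formal partial derivative `pderiv l`. The
Jacobi identity is therefore the evaluation of an identity between polynomials in
`ℝ[X₀, …, X₄]`, which is checked by expanding all `5³` triples `(i, j, k)`.
-/

open Matrix

/-- The structure matrix of the KdV (3,-2) reduction. -/
noncomputable def kdvOmega (v : Fin 5 → ℝ) : Matrix (Fin 5) (Fin 5) ℝ :=
  !![0, 0, -(v 0)^2*(v 2)^2, (v 0)^2*(v 3)^2, (v 0)^2*(v 2)^2*(v 4)^2;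
     0, 0, 0, -(v 1)^2*(v 3)^2, (v 1)^2*(v 4)^2;
     (v 0)^2*(v 2)^2, 0, 0, 0, -(v 2)^2*(v 4)^2;
     -(v 0)^2*(v 3)^2, (v 1)^2*(v 3)^2, 0, 0, 0;
     -(v 0)^2*(v 2)^2*(v 4)^2, -(v 1)^2*(v 4)^2, (v 2)^2*(v 4)^2, 0, 0]

/-- Partial derivative of `f : (Fin 5 → ℝ) → ℝ` with respect to the `l`-th coordinate. -/
noncomputable def pd (l : Fin 5) (f : (Fin 5 → ℝ) → ℝ) (v : Fin 5 → ℝ) : ℝ :=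
  deriv (fun t => f (Function.update v l t)) (v l)

open MvPolynomial

theorem MvPolynomial.hasDerivAt_eval_update {σ 𝕜 : Type*} [DecidableEq σ]
    [NontriviallyNormedField 𝕜] (p : MvPolynomial σ 𝕜) (v : σ → 𝕜) (l : σ) :
    HasDerivAt (fun t => eval (Function.update v l t) p) (eval v (pderiv l p)) (v l) := by
  induction p using MvPolynomial.induction_on with
  | C a => simpa using hasDerivAt_const (v l) a
  | add p q hp hq =>
    simp only [map_add]
    exact hp.add hq
  | mul_X p n hp =>
    have hn :
        HasDerivAt (fun t => Function.update v l t n) ((Pi.single l 1 : σ → 𝕜) n) (v l) := by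
      rcases eq_or_ne n l with rfl | h
      · simpa using hasDerivAt_id' (v n)
      · simpa [h] using hasDerivAt_const (v l) (v n)
    simp only [map_mul, eval_X, pderiv_mul, pderiv_X]
    refine (hp.mul hn).congr_deriv ?_
    rcases eq_or_ne n l with rfl | h <;> simp [*]

theorem pd_eval (p : MvPolynomial (Fin 5) ℝ) (l : Fin 5) (v : Fin 5 → ℝ) :
    pd l (fun w => eval w p) v = eval v (pderiv l p) :=
  (p.hasDerivAt_eval_update v l).deriv

noncomputable def jacobiator {σ R : Type*} [CommSemiring R] [Fintype σ]
    (P : Matrix σ σ (MvPolynomial σ R)) (i j k : σ) : MvPolynomial σ R :=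
  ∑ l, (P l i * pderiv l (P j k) + P l j * pderiv l (P k i) + P l k * pderiv l (P i j))

theorem sum_eval_mul_pd_eq_eval_jacobiator (P : Matrix (Fin 5) (Fin 5) (MvPolynomial (Fin 5) ℝ))
    (v : Fin 5 → ℝ) (i j k : Fin 5) :
    ∑ l : Fin 5,
      (eval v (P l i) * pd l (fun w => eval w (P j k)) v
        + eval v (P l j) * pd l (fun w => eval w (P k i)) v
        + eval v (P l k) * pd l (fun w => eval w (P i j)) v) = eval v (jacobiator P i j k) := by
  simp [jacobiator, pd_eval]

noncomputable def kdvPoly : Matrix (Fin 5) (Fin 5) (MvPolynomial (Fin 5) ℝ) :=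
  !![0, 0, -X 0^2*X 2^2, X 0^2*X 3^2, X 0^2*X 2^2*X 4^2;
     0, 0, 0, -X 1^2*X 3^2, X 1^2*X 4^2;
     X 0^2*X 2^2, 0, 0, 0, -X 2^2*X 4^2;
     -X 0^2*X 3^2, X 1^2*X 3^2, 0, 0, 0;
     -X 0^2*X 2^2*X 4^2, -X 1^2*X 4^2, X 2^2*X 4^2, 0, 0]

theorem kdvOmega_eq_map_eval : kdvOmega = fun v => kdvPoly.map (eval v) := by
  ext v i j
  fin_cases i <;> fin_cases j <;> simp [kdvOmega, kdvPoly]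

set_option maxHeartbeats 1000000 in
theorem jacobiator_kdvPoly (i j k : Fin 5) : jacobiator kdvPoly i j k = 0 := by
  fin_cases i <;> fin_cases j <;> fin_cases k <;>
    simp [jacobiator, kdvPoly, Fin.sum_univ_five] <;> ring

/-- The KdV structure matrix satisfies the Jacobi identity, hence defines a
Poisson bracket on ℝ⁵. -/
theorem kdvOmega_jacobi (v : Fin 5 → ℝ) (i j k : Fin 5) :
    ∑ l : Fin 5,
      (kdvOmega v l i * pd l (fun w => kdvOmega w j k) v
        + kdvOmega v l j * pd l (fun w => kdvOmega w k i) v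
        + kdvOmega v l k * pd l (fun w => kdvOmega w i j) v) = 0 := by
  simp only [kdvOmega_eq_map_eval, map_apply]
  rw [sum_eval_mul_pd_eq_eval_jacobiator, jacobiator_kdvPoly, map_zero]
end

section
/- The 5-dimensional KdV map φ(v₀,...,v₄) = (v₁,...,v₄, -v₀/(v₀v₂ - v₀v₃ - 1)) is a Poisson map for the structure matrix Ω with nonzero upper-triangular entries Ω₁₃ = -v₀²v₂², Ω₁₄ = v₀²v₃², Ω₁₅ = v₀²v₂²v₄², Ω₂₄ = -v₁²v₃², Ω₂₅ = v₁²v₄², Ω₃₅ = -v₂²v₄²; that is, dφ · Ω(v) · dφᵀ = Ω(φ(v)). -/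
/-!
The first four components of `φ` are shifts, so `dφ` is the shift matrix with last row
`(a, 0, w², -w², 0)`, where `w = φ₄ = -v₀ / D`, `D = v₀v₂ - v₀v₃ - 1` and
`a = ∂w/∂v₀ = 1 / D²`.
Conjugating `Ω(v)` by such a matrix shifts its indices down by one, which reproduces the
entries of `Ω(φ(v))` not involving `w`, and creates a last row and column whose entries involve
only `w²` and `a v₀²`. Since `a v₀² = w²`, these are the remaining entries of `Ω(φ(v))`.
-/

open Matrix

noncomputable def kdvMap (v : Fin 5 → ℝ) : Fin 5 → ℝ :=
  ![v 1, v 2, v 3, v 4, -(v 0) / (v 0 * v 2 - v 0 * v 3 - 1)]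

noncomputable def kdvJac (v : Fin 5 → ℝ) : Matrix (Fin 5) (Fin 5) ℝ :=
  fun i j => deriv (fun t => kdvMap (Function.update v j t) i) (v j)

theorem hasDerivAt_update_apply {𝕜 ι : Type*} [NontriviallyNormedField 𝕜] [DecidableEq ι]
    (v : ι → 𝕜) (j k : ι) :
    HasDerivAt (fun t => Function.update v j t k) (Pi.single (M := fun _ => 𝕜) j 1 k) (v j) :=
  hasDerivAt_pi.1 (hasDerivAt_update v j (v j)) k

def kdvJacOf (a b : ℝ) : Matrix (Fin 5) (Fin 5) ℝ :=
  !![0, 1, 0, 0, 0; 0, 0, 1, 0, 0; 0, 0, 0, 1, 0; 0, 0, 0, 0, 1; a, 0, b, -b, 0]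

theorem kdvJacOf_mul_kdvOmega_mul_transpose (v : Fin 5 → ℝ) (a w : ℝ)
    (hw : a * v 0 ^ 2 = w ^ 2) :
    kdvJacOf a (w ^ 2) * kdvOmega v * (kdvJacOf a (w ^ 2))ᵀ =
      kdvOmega ![v 1, v 2, v 3, v 4, w] := by
  ext i j
  fin_cases i <;> fin_cases j <;>
    simp [kdvJacOf, kdvOmega, mul_apply, Fin.sum_univ_five, ← hw] <;> ring

theorem hasDerivAt_kdvMap_last (v : Fin 5 → ℝ) (j : Fin 5)
    (h : v 0 * v 2 - v 0 * v 3 - 1 ≠ 0) :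
    HasDerivAt (fun t => kdvMap (Function.update v j t) 4)
      ((v 0 * v 2 - v 0 * v 3 - 1)⁻¹ ^ 2 * (Pi.single (M := fun _ => ℝ) j 1 0 +
        v 0 ^ 2 * (Pi.single (M := fun _ => ℝ) j 1 2 - Pi.single (M := fun _ => ℝ) j 1 3)))
      (v j) := by
  have hu := hasDerivAt_update_apply v j
  have hD := (((hu 0).mul (hu 2)).sub ((hu 0).mul (hu 3))).sub_const 1
  refine ((hu 0).neg.div hD (by simpa using h)).congr_deriv ?_
  simp only [Pi.mul_apply, Pi.sub_apply, Pi.neg_apply, Function.update_eq_self]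
  field_simp
  ring

theorem kdvJac_apply_castSucc (v : Fin 5 → ℝ) (i : Fin 4) (j : Fin 5) :
    kdvJac v i.castSucc j = Pi.single (M := fun _ => ℝ) j 1 i.succ := by
  have hshift : (fun t => kdvMap (Function.update v j t) i.castSucc) =
      fun t => Function.update v j t i.succ := by
    ext t
    fin_cases i <;> rfl
  rw [kdvJac, hshift, (hasDerivAt_update_apply v j _).deriv]

theorem kdvJac_eq (v : Fin 5 → ℝ) (h : v 0 * v 2 - v 0 * v 3 - 1 ≠ 0) :
    kdvJac v = kdvJacOf ((v 0 * v 2 - v 0 * v 3 - 1)⁻¹ ^ 2) (kdvMap v 4 ^ 2) := by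
  ext i j
  induction i using Fin.lastCases with
  | last =>
    change deriv (fun t => kdvMap (Function.update v j t) 4) (v j) = _
    rw [(hasDerivAt_kdvMap_last v j h).deriv]
    fin_cases j <;> simp [kdvJacOf, kdvMap] <;> field_simp
  | cast i =>
    rw [kdvJac_apply_castSucc]
    fin_cases i <;> fin_cases j <;> simp [kdvJacOf]

/-- The KdV map is a Poisson map for the structure matrix `kdvOmega`. -/
theorem kdvMap_poisson (v : Fin 5 → ℝ) (h : v 0 * v 2 - v 0 * v 3 - 1 ≠ 0) :
    kdvJac v * kdvOmega v * (kdvJac v)ᵀ = kdvOmega (kdvMap v) := by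
  rw [kdvJac_eq v h]
  exact kdvJacOf_mul_kdvOmega_mul_transpose v _ _ (by simp [kdvMap]; field_simp)
end

section
/- The function I₁ = 1/v₀ + 1/v₁ + 1/v₂ + 1/v₃ + 1/v₄ - v₂ is a Casimir of the Poisson bracket on ℝ⁵ with structure matrix Ω having nonzero entries Ω₁₃ = -v₀²v₂², Ω₁₄ = v₀²v₃², Ω₁₅ = v₀²v₂²v₄², Ω₂₄ = -v₁²v₃², Ω₂₅ = v₁²v₄², Ω₃₅ = -v₂²v₄²; i.e., Ω · (∇I₁)ᵀ = 0. -/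
open Matrix

/-- The integral I₁ of the KdV reduction. -/
noncomputable def kdvI1 (v : Fin 5 → ℝ) : ℝ :=
  1 / v 0 + 1 / v 1 + 1 / v 2 + 1 / v 3 + 1 / v 4 - v 2

/-- Gradient of a function on ℝ⁵ (vector of partial derivatives). -/
noncomputable def grad (f : (Fin 5 → ℝ) → ℝ) (v : Fin 5 → ℝ) : Fin 5 → ℝ :=
  fun l => deriv (fun t => f (Function.update v l t)) (v l)

open Function Finset

section PartialDerivatives

variable {ι : Type*} [DecidableEq ι]

lemma hasDerivAt_update_apply_s5 (v : ι → ℝ) (l k : ι) :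
    HasDerivAt (fun t => update v l t k) ((Pi.single l 1 : ι → ℝ) k) (v l) :=
  hasDerivAt_pi.1 (hasDerivAt_update v l (v l)) k

lemma hasDerivAt_sum_one_div_update [Fintype ι] {v : ι → ℝ} {l : ι} (hl : v l ≠ 0) :
    HasDerivAt (fun t => ∑ i, 1 / update v l t i) (-(v l ^ 2)⁻¹) (v l) := by
  have hsum : (fun t => ∑ i, 1 / update v l t i)
      = fun t => t⁻¹ + ∑ i ∈ univ \ {l}, 1 / v i := by
    funext t
    rw [sum_congr rfl fun i _ => apply_update (fun _ x => 1 / x) v l t i,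
      sum_update_of_mem (mem_univ l), one_div]
  rw [hsum]
  exact (hasDerivAt_inv hl).add_const _

end PartialDerivatives

lemma kdvI1_eq_sum (v : Fin 5 → ℝ) : kdvI1 v = ∑ i, 1 / v i - v 2 := by
  simp only [kdvI1, Fin.sum_univ_five]

lemma grad_kdvI1_apply {v : Fin 5 → ℝ} {l : Fin 5} (hl : v l ≠ 0) :
    grad kdvI1 v l = -(v l ^ 2)⁻¹ - (Pi.single l 1 : Fin 5 → ℝ) 2 := by
  simp only [grad, kdvI1_eq_sum]
  exact ((hasDerivAt_sum_one_div_update hl).sub (hasDerivAt_update_apply_s5 v l 2)).deriv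

/-- I₁ is a Casimir of the KdV Poisson structure: Ω · ∇I₁ = 0. -/
theorem kdvI1_casimir (v : Fin 5 → ℝ) (h : ∀ i, v i ≠ 0) :
    kdvOmega v *ᵥ grad kdvI1 v = 0 := by
  have hgrad : grad kdvI1 v = fun l => -(v l ^ 2)⁻¹ - (Pi.single l 1 : Fin 5 → ℝ) 2 :=
    funext fun l => grad_kdvI1_apply (h l)
  rw [hgrad]
  ext i
  fin_cases i <;> simp [kdvOmega, mulVec, dotProduct, Fin.sum_univ_five] <;>
    field_simp [h 0, h 1, h 2, h 3, h 4] <;> ring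
end

section
/- The integrals I₂ = (v₂v₄-1)(v₁v₃-1)(v₀v₂-1)/(v₀v₁v₂v₃v₄) and I₃ = (v₁v₄+1)(v₀v₃+1)/(v₀v₁v₂v₃v₄) of the (3,-2) KdV reduction are in involution with respect to the Poisson bracket with structure matrix Ω₁₃ = -v₀²v₂², Ω₁₄ = v₀²v₃², Ω₁₅ = v₀²v₂²v₄², Ω₂₄ = -v₁²v₃², Ω₂₅ = v₁²v₄², Ω₃₅ = -v₂²v₄²: {I₂, I₃} = ∇I₂ · Ω · (∇I₃)ᵀ = 0. -/
open Matrix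

/-- The integral I₂ of the KdV reduction. -/
noncomputable def kdvI2 (v : Fin 5 → ℝ) : ℝ :=
  (v 2 * v 4 - 1) * (v 1 * v 3 - 1) * (v 0 * v 2 - 1) / (v 0 * v 1 * v 2 * v 3 * v 4)

/-- The integral I₃ of the KdV reduction. -/
noncomputable def kdvI3 (v : Fin 5 → ℝ) : ℝ :=
  (v 1 * v 4 + 1) * (v 0 * v 3 + 1) / (v 0 * v 1 * v 2 * v 3 * v 4)

/-! In each coordinate `v l`, with the others fixed, `I₂` and `I₃` are rational functions of the
form `(a t² + b t + c) / (d t)`, whose derivative is `(a t² - c) / (d t²)`. This makes both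
gradients explicit; after multiplying through by the monomial denominators the bracket becomes a
polynomial identity. -/

theorem hasDerivAt_quadratic_div_linear {𝕜 : Type*} [NontriviallyNormedField 𝕜] (a b c d x : 𝕜)
    (hd : d ≠ 0) (hx : x ≠ 0) :
    HasDerivAt (fun t => (a * t ^ 2 + b * t + c) / (d * t)) ((a * x ^ 2 - c) / (d * x ^ 2)) x := by
  have hnum : HasDerivAt (fun t => a * t ^ 2 + b * t + c) (a * (2 * x) + b) x := by
    simpa using (((hasDerivAt_pow 2 x).const_mul a).add ((hasDerivAt_id x).const_mul b)).add_const c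
  have hden : HasDerivAt (fun t => d * t) d x := by
    simpa using (hasDerivAt_id x).const_mul d
  refine (hnum.div hden (mul_ne_zero hd hx)).congr_deriv ?_
  field_simp
  ring

theorem grad_apply_of_update_eq {f : (Fin 5 → ℝ) → ℝ} {v : Fin 5 → ℝ} {l : Fin 5}
    (a b c d : ℝ) (hd : d ≠ 0) (hl : v l ≠ 0)
    (hf : ∀ t, f (Function.update v l t) = (a * t ^ 2 + b * t + c) / (d * t)) :
    grad f v l = (a * v l ^ 2 - c) / (d * v l ^ 2) := by
  simp only [grad, funext hf]
  exact (hasDerivAt_quadratic_div_linear a b c d (v l) hd hl).deriv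

section

variable {v : Fin 5 → ℝ}

theorem grad_kdvI2 (h : ∀ i, v i ≠ 0) :
    grad kdvI2 v = (v 0 * v 1 * v 2 * v 3 * v 4)⁻¹ •
      ![(v 2 * v 4 - 1) * (v 1 * v 3 - 1) / v 0,
        (v 2 * v 4 - 1) * (v 0 * v 2 - 1) / v 1,
        (v 1 * v 3 - 1) * (v 0 * v 4 * v 2 ^ 2 - 1) / v 2,
        (v 2 * v 4 - 1) * (v 0 * v 2 - 1) / v 3,
        (v 1 * v 3 - 1) * (v 0 * v 2 - 1) / v 4] := by
  have h0 := h 0; have h1 := h 1; have h2 := h 2; have h3 := h 3; have h4 := h 4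
  have e0 := grad_apply_of_update_eq (f := kdvI2) (l := 0) 0
    ((v 2 * v 4 - 1) * (v 1 * v 3 - 1) * v 2) (-((v 2 * v 4 - 1) * (v 1 * v 3 - 1)))
    (v 1 * v 2 * v 3 * v 4) (by positivity) h0
    (fun t => by simp only [kdvI2, Function.update_apply, Fin.reduceEq, ↓reduceIte]; ring)
  have e1 := grad_apply_of_update_eq (f := kdvI2) (l := 1) 0
    ((v 2 * v 4 - 1) * (v 0 * v 2 - 1) * v 3) (-((v 2 * v 4 - 1) * (v 0 * v 2 - 1)))
    (v 0 * v 2 * v 3 * v 4) (by positivity) h1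
    (fun t => by simp only [kdvI2, Function.update_apply, Fin.reduceEq, ↓reduceIte]; ring)
  have e2 := grad_apply_of_update_eq (f := kdvI2) (l := 2) ((v 1 * v 3 - 1) * (v 0 * v 4))
    (-((v 1 * v 3 - 1) * (v 0 + v 4))) (v 1 * v 3 - 1)
    (v 0 * v 1 * v 3 * v 4) (by positivity) h2
    (fun t => by simp only [kdvI2, Function.update_apply, Fin.reduceEq, ↓reduceIte]; ring)
  have e3 := grad_apply_of_update_eq (f := kdvI2) (l := 3) 0
    ((v 2 * v 4 - 1) * (v 0 * v 2 - 1) * v 1) (-((v 2 * v 4 - 1) * (v 0 * v 2 - 1)))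
    (v 0 * v 1 * v 2 * v 4) (by positivity) h3
    (fun t => by simp only [kdvI2, Function.update_apply, Fin.reduceEq, ↓reduceIte]; ring)
  have e4 := grad_apply_of_update_eq (f := kdvI2) (l := 4) 0
    ((v 1 * v 3 - 1) * (v 0 * v 2 - 1) * v 2) (-((v 1 * v 3 - 1) * (v 0 * v 2 - 1)))
    (v 0 * v 1 * v 2 * v 3) (by positivity) h4
    (fun t => by simp only [kdvI2, Function.update_apply, Fin.reduceEq, ↓reduceIte]; ring)
  ext l
  fin_cases l <;>
    simp only [e0, e1, e2, e3, e4, Fin.zero_eta, Fin.mk_one, Fin.reduceFinMk, Pi.smul_apply,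
      smul_eq_mul, cons_val_zero, cons_val_one, cons_val] <;>
    field_simp <;> ring

theorem grad_kdvI3 (h : ∀ i, v i ≠ 0) :
    grad kdvI3 v = -(v 0 * v 1 * v 2 * v 3 * v 4)⁻¹ •
      ![(v 1 * v 4 + 1) / v 0,
        (v 0 * v 3 + 1) / v 1,
        (v 1 * v 4 + 1) * (v 0 * v 3 + 1) / v 2,
        (v 1 * v 4 + 1) / v 3,
        (v 0 * v 3 + 1) / v 4] := by
  have h0 := h 0; have h1 := h 1; have h2 := h 2; have h3 := h 3; have h4 := h 4
  have e0 := grad_apply_of_update_eq (f := kdvI3) (l := 0) 0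
    ((v 1 * v 4 + 1) * v 3) (v 1 * v 4 + 1)
    (v 1 * v 2 * v 3 * v 4) (by positivity) h0
    (fun t => by simp only [kdvI3, Function.update_apply, Fin.reduceEq, ↓reduceIte]; ring)
  have e1 := grad_apply_of_update_eq (f := kdvI3) (l := 1) 0
    ((v 0 * v 3 + 1) * v 4) (v 0 * v 3 + 1)
    (v 0 * v 2 * v 3 * v 4) (by positivity) h1
    (fun t => by simp only [kdvI3, Function.update_apply, Fin.reduceEq, ↓reduceIte]; ring)
  have e2 := grad_apply_of_update_eq (f := kdvI3) (l := 2) 0 0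
    ((v 1 * v 4 + 1) * (v 0 * v 3 + 1))
    (v 0 * v 1 * v 3 * v 4) (by positivity) h2
    (fun t => by simp only [kdvI3, Function.update_apply, Fin.reduceEq, ↓reduceIte]; ring)
  have e3 := grad_apply_of_update_eq (f := kdvI3) (l := 3) 0
    ((v 1 * v 4 + 1) * v 0) (v 1 * v 4 + 1)
    (v 0 * v 1 * v 2 * v 4) (by positivity) h3
    (fun t => by simp only [kdvI3, Function.update_apply, Fin.reduceEq, ↓reduceIte]; ring)
  have e4 := grad_apply_of_update_eq (f := kdvI3) (l := 4) 0
    ((v 0 * v 3 + 1) * v 1) (v 0 * v 3 + 1)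
    (v 0 * v 1 * v 2 * v 3) (by positivity) h4
    (fun t => by simp only [kdvI3, Function.update_apply, Fin.reduceEq, ↓reduceIte]; ring)
  ext l
  fin_cases l <;>
    simp only [e0, e1, e2, e3, e4, Fin.zero_eta, Fin.mk_one, Fin.reduceFinMk, Pi.smul_apply,
      smul_eq_mul, cons_val_zero, cons_val_one, cons_val] <;>
    field_simp <;> ring

end

/-- I₂ and I₃ are in involution with respect to the KdV Poisson bracket. -/
theorem kdvI2_I3_involution (v : Fin 5 → ℝ) (h : ∀ i, v i ≠ 0) :
    grad kdvI2 v ⬝ᵥ (kdvOmega v *ᵥ grad kdvI3 v) = 0 := by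
  have h0 := h 0; have h1 := h 1; have h2 := h 2; have h3 := h 3; have h4 := h 4
  rw [grad_kdvI2 h, grad_kdvI3 h]
  simp only [dotProduct, mulVec, Fin.sum_univ_five, kdvOmega, of_apply, cons_val', cons_val_zero,
    cons_val_one, cons_val, cons_val_fin_one, Pi.smul_apply, smul_eq_mul]
  field_simp
  ring
end

section
/- For the (3,-2) reduction of the plus-KdV equation, v₅ determined by v₂ + v₃ = 1/v₀ + 1/v₅, the function J₁ = 1/v₀ - 1/v₁ + 1/v₂ - 1/v₃ + 1/v₄ - v₂ is a 2-integral: J₁(v₁,...,v₅) = -J₁(v₀,...,v₄). -/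
/-!
Shifting `J₁` one step and adding the original telescopes to `1/v₀ + 1/v₅ - (v₂ + v₃)`, which is
exactly the defining relation `v₂ + v₃ = 1/v₀ + 1/v₅` of the map.
-/

section PlusKdV

variable {K : Type*} [Field K]

def plusKdVJ1 (v0 v1 v2 v3 v4 : K) : K :=
  1/v0 - 1/v1 + 1/v2 - 1/v3 + 1/v4 - v2

theorem plusKdVJ1_shift_add (v0 v1 v2 v3 v4 v5 : K) :
    plusKdVJ1 v1 v2 v3 v4 v5 + plusKdVJ1 v0 v1 v2 v3 v4 = 1/v0 + 1/v5 - (v2 + v3) := by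
  unfold plusKdVJ1
  ring

theorem one_div_add_one_div_plusKdV_step {v0 : K} (h0 : v0 ≠ 0) (v2 v3 : K) :
    1/v0 + 1/(v0 / (v0 * v2 + v0 * v3 - 1)) = v2 + v3 := by
  rw [one_div_div]
  field_simp
  ring

end PlusKdV

theorem plus_kdv_J1_anti_integral_general (v0 v1 v2 v3 v4 : ℝ)
    (h0 : v0 ≠ 0)
    (v5 : ℝ) (hv5 : v5 = v0 / (v0 * v2 + v0 * v3 - 1)) :
    1/v1 - 1/v2 + 1/v3 - 1/v4 + 1/v5 - v3
      = -(1/v0 - 1/v1 + 1/v2 - 1/v3 + 1/v4 - v2) := by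
  subst hv5
  have hsum := plusKdVJ1_shift_add v0 v1 v2 v3 v4 (v0 / (v0 * v2 + v0 * v3 - 1))
  rw [one_div_add_one_div_plusKdV_step h0, sub_self] at hsum
  unfold plusKdVJ1 at hsum
  linear_combination hsum

/-- J₁ is a 2-integral (anti-integral) of the (3,-2) plus-KdV reduction. -/
theorem plus_kdv_J1_anti_integral (v0 v1 v2 v3 v4 : ℝ)
    (h0 : v0 ≠ 0) (h1 : v1 ≠ 0) (h2 : v2 ≠ 0) (h3 : v3 ≠ 0) (h4 : v4 ≠ 0)
    (hden : v0 * v2 + v0 * v3 - 1 ≠ 0)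
    (v5 : ℝ) (hv5 : v5 = v0 / (v0 * v2 + v0 * v3 - 1)) :
    1/v1 - 1/v2 + 1/v3 - 1/v4 + 1/v5 - v3
      = -(1/v0 - 1/v1 + 1/v2 - 1/v3 + 1/v4 - v2) :=
  plus_kdv_J1_anti_integral_general v0 v1 v2 v3 v4 h0 v5 hv5
end

section
/- For the (3,-2) reduction of the plus-KdV equation with v₅ = v₀/(v₀v₂ + v₀v₃ - 1), the function J₂ = (v₂v₄-1)(v₁v₃-1)(v₀v₂-1)/(v₀v₁v₂v₃v₄) satisfies J₂(v₁,...,v₅) = -J₂(v₀,...,v₄). -/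
/-!
The only factor of J₂ that changes under the map is `(v₀v₂ - 1)/v₀`, which becomes
`(v₃v₅ - 1)/v₅`; since `v₃v₅ - 1 = -(v₀v₂ - 1)/(v₀v₂ + v₀v₃ - 1)` and `v₅ = v₀/(v₀v₂ + v₀v₃ - 1)`,
the two differ exactly by a sign.
-/

theorem plusKdV_factor_anti_invariant {K : Type*} [Field K] {v0 v2 v3 : K} (h0 : v0 ≠ 0)
    (hden : v0 * v2 + v0 * v3 - 1 ≠ 0) :
    (v3 * (v0 / (v0 * v2 + v0 * v3 - 1)) - 1) / (v0 / (v0 * v2 + v0 * v3 - 1))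
      = -((v0 * v2 - 1) / v0) := by
  generalize hD : v0 * v2 + v0 * v3 - 1 = D at hden ⊢
  field_simp
  rw [← hD]
  ring

theorem plus_kdv_J2_anti_integral_general (v0 v1 v2 v3 v4 : ℝ)
    (h0 : v0 ≠ 0)
    (hden : v0 * v2 + v0 * v3 - 1 ≠ 0)
    (v5 : ℝ) (hv5 : v5 = v0 / (v0 * v2 + v0 * v3 - 1)) :
    (v3 * v5 - 1) * (v2 * v4 - 1) * (v1 * v3 - 1) / (v1 * v2 * v3 * v4 * v5)
      = -((v2 * v4 - 1) * (v1 * v3 - 1) * (v0 * v2 - 1) / (v0 * v1 * v2 * v3 * v4)) := by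
  have hfactor := plusKdV_factor_anti_invariant (v2 := v2) (v3 := v3) h0 hden
  rw [← hv5] at hfactor
  calc (v3 * v5 - 1) * (v2 * v4 - 1) * (v1 * v3 - 1) / (v1 * v2 * v3 * v4 * v5)
      = (v3 * v5 - 1) / v5 * ((v2 * v4 - 1) * (v1 * v3 - 1) / (v1 * v2 * v3 * v4)) := by ring
    _ = -((v0 * v2 - 1) / v0) * ((v2 * v4 - 1) * (v1 * v3 - 1) / (v1 * v2 * v3 * v4)) := by
      rw [hfactor]
    _ = -((v2 * v4 - 1) * (v1 * v3 - 1) * (v0 * v2 - 1) / (v0 * v1 * v2 * v3 * v4)) := by ring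

/-- J₂ is a 2-integral (anti-integral) of the (3,-2) plus-KdV reduction. -/
theorem plus_kdv_J2_anti_integral (v0 v1 v2 v3 v4 : ℝ)
    (h0 : v0 ≠ 0) (h1 : v1 ≠ 0) (h2 : v2 ≠ 0) (h3 : v3 ≠ 0) (h4 : v4 ≠ 0)
    (hden : v0 * v2 + v0 * v3 - 1 ≠ 0)
    (v5 : ℝ) (hv5 : v5 = v0 / (v0 * v2 + v0 * v3 - 1)) :
    (v3 * v5 - 1) * (v2 * v4 - 1) * (v1 * v3 - 1) / (v1 * v2 * v3 * v4 * v5)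
      = -((v2 * v4 - 1) * (v1 * v3 - 1) * (v0 * v2 - 1) / (v0 * v1 * v2 * v3 * v4)) :=
  plus_kdv_J2_anti_integral_general v0 v1 v2 v3 v4 h0 hden v5 hv5
end

section
/- For the (3,-2) reduction of the plus-KdV equation with v₅ = v₀/(v₀v₂ + v₀v₃ - 1), the function J₃ = (v₁v₄-1)(v₀v₃-1)/(v₀v₁v₂v₃v₄) satisfies J₃(v₁,...,v₅) = -J₃(v₀,...,v₄). Consequently J₂/J₃ and J₂J₃ (with J₂ = (v₂v₄-1)(v₁v₃-1)(v₀v₂-1)/(v₀v₁v₂v₃v₄)) are genuine integrals of the map. -/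
/-!
With `d = v₀v₂ + v₀v₃ - 1` the new coordinate is `v₅ = v₀ / d`, and
`v₂v₅ - 1 = -(v₀v₃ - 1) / d`, `v₃v₅ - 1 = -(v₀v₂ - 1) / d`. In the shifted `J₃` (resp. `J₂`) the
factor `v₂v₅ - 1` (resp. `v₃v₅ - 1`) thus trades `v₅` for `v₀` at the cost of a sign, and the `d`
cancels against the one in `v₅` in the denominator; so `J₃` and `J₂` both change sign under the
map, and their quotient and product are invariant.
-/

variable {K : Type*} [Field K]

/-- The new coordinate `v₅` of the (3,-2) reduction of plus-KdV. -/
def plusKdVStep (v0 v2 v3 : K) : K := v0 / (v0 * v2 + v0 * v3 - 1)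

def plusKdVJ2 (v0 v1 v2 v3 v4 : K) : K :=
  (v2 * v4 - 1) * (v1 * v3 - 1) * (v0 * v2 - 1) / (v0 * v1 * v2 * v3 * v4)

def plusKdVJ3 (v0 v1 v2 v3 v4 : K) : K :=
  (v1 * v4 - 1) * (v0 * v3 - 1) / (v0 * v1 * v2 * v3 * v4)

theorem plusKdVStep_comm (v0 v2 v3 : K) : plusKdVStep v0 v2 v3 = plusKdVStep v0 v3 v2 := by
  rw [plusKdVStep, plusKdVStep, add_comm (v0 * v2)]

theorem mul_plusKdVStep_sub_one {v0 v2 v3 : K} (hd : v0 * v2 + v0 * v3 - 1 ≠ 0) :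
    v2 * plusKdVStep v0 v2 v3 - 1 = -(v0 * v3 - 1) / (v0 * v2 + v0 * v3 - 1) := by
  rw [plusKdVStep, mul_div_assoc', div_sub_one hd]
  ring

theorem div_div_mul_div_cancel_right₀ {d : K} (hd : d ≠ 0) (a c e : K) :
    a / d / (c * (e / d)) = a / (c * e) := by
  rw [mul_div_assoc', div_div_div_cancel_right₀ hd]

theorem plusKdVJ3_step {v0 v2 v3 : K} (v1 v4 : K) (hd : v0 * v2 + v0 * v3 - 1 ≠ 0) :
    plusKdVJ3 v1 v2 v3 v4 (plusKdVStep v0 v2 v3) = -plusKdVJ3 v0 v1 v2 v3 v4 := by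
  rw [plusKdVJ3, mul_plusKdVStep_sub_one hd, div_mul_eq_mul_div, plusKdVStep,
    div_div_mul_div_cancel_right₀ hd, plusKdVJ3]
  ring

theorem plusKdVJ2_step {v0 v2 v3 : K} (v1 v4 : K) (hd : v0 * v2 + v0 * v3 - 1 ≠ 0) :
    plusKdVJ2 v1 v2 v3 v4 (plusKdVStep v0 v2 v3) = -plusKdVJ2 v0 v1 v2 v3 v4 := by
  have hd' : v0 * v3 + v0 * v2 - 1 ≠ 0 := by rwa [add_comm]
  rw [plusKdVJ2, plusKdVStep_comm, mul_plusKdVStep_sub_one hd', div_mul_eq_mul_div,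
    div_mul_eq_mul_div, plusKdVStep, div_div_mul_div_cancel_right₀ hd', plusKdVJ2]
  ring

theorem plus_kdv_J3_anti_integral_general (v0 v1 v2 v3 v4 : ℝ)
    (hden : v0 * v2 + v0 * v3 - 1 ≠ 0)
    (v5 : ℝ) (hv5 : v5 = v0 / (v0 * v2 + v0 * v3 - 1)) :
    ((v2 * v5 - 1) * (v1 * v4 - 1) / (v1 * v2 * v3 * v4 * v5)
        = -((v1 * v4 - 1) * (v0 * v3 - 1) / (v0 * v1 * v2 * v3 * v4)))
    ∧ (((v3 * v5 - 1) * (v2 * v4 - 1) * (v1 * v3 - 1) / (v1 * v2 * v3 * v4 * v5)) /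
          ((v2 * v5 - 1) * (v1 * v4 - 1) / (v1 * v2 * v3 * v4 * v5))
        = ((v2 * v4 - 1) * (v1 * v3 - 1) * (v0 * v2 - 1) / (v0 * v1 * v2 * v3 * v4)) /
          ((v1 * v4 - 1) * (v0 * v3 - 1) / (v0 * v1 * v2 * v3 * v4)))
    ∧ (((v3 * v5 - 1) * (v2 * v4 - 1) * (v1 * v3 - 1) / (v1 * v2 * v3 * v4 * v5)) *
          ((v2 * v5 - 1) * (v1 * v4 - 1) / (v1 * v2 * v3 * v4 * v5))
        = ((v2 * v4 - 1) * (v1 * v3 - 1) * (v0 * v2 - 1) / (v0 * v1 * v2 * v3 * v4)) *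
          ((v1 * v4 - 1) * (v0 * v3 - 1) / (v0 * v1 * v2 * v3 * v4))) := by
  have hv5 : v5 = plusKdVStep v0 v2 v3 := hv5
  subst hv5
  have hJ3 := plusKdVJ3_step v1 v4 hden
  have hJ2 := plusKdVJ2_step v1 v4 hden
  simp only [plusKdVJ2, plusKdVJ3] at hJ2 hJ3
  exact ⟨hJ3, by rw [hJ2, hJ3, neg_div_neg_eq], by rw [hJ2, hJ3, neg_mul_neg]⟩

/-- J₃ is a 2-integral (anti-integral) of the (3,-2) plus-KdV reduction;
consequently J₂/J₃ and J₂·J₃ are integrals. -/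
theorem plus_kdv_J3_anti_integral (v0 v1 v2 v3 v4 : ℝ)
    (h0 : v0 ≠ 0) (h1 : v1 ≠ 0) (h2 : v2 ≠ 0) (h3 : v3 ≠ 0) (h4 : v4 ≠ 0)
    (hden : v0 * v2 + v0 * v3 - 1 ≠ 0)
    (v5 : ℝ) (hv5 : v5 = v0 / (v0 * v2 + v0 * v3 - 1)) :
    ((v2 * v5 - 1) * (v1 * v4 - 1) / (v1 * v2 * v3 * v4 * v5)
        = -((v1 * v4 - 1) * (v0 * v3 - 1) / (v0 * v1 * v2 * v3 * v4)))
    ∧ (((v3 * v5 - 1) * (v2 * v4 - 1) * (v1 * v3 - 1) / (v1 * v2 * v3 * v4 * v5)) /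
          ((v2 * v5 - 1) * (v1 * v4 - 1) / (v1 * v2 * v3 * v4 * v5))
        = ((v2 * v4 - 1) * (v1 * v3 - 1) * (v0 * v2 - 1) / (v0 * v1 * v2 * v3 * v4)) /
          ((v1 * v4 - 1) * (v0 * v3 - 1) / (v0 * v1 * v2 * v3 * v4)))
    ∧ (((v3 * v5 - 1) * (v2 * v4 - 1) * (v1 * v3 - 1) / (v1 * v2 * v3 * v4 * v5)) *
          ((v2 * v5 - 1) * (v1 * v4 - 1) / (v1 * v2 * v3 * v4 * v5))
        = ((v2 * v4 - 1) * (v1 * v3 - 1) * (v0 * v2 - 1) / (v0 * v1 * v2 * v3 * v4)) *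
          ((v1 * v4 - 1) * (v0 * v3 - 1) / (v0 * v1 * v2 * v3 * v4))) :=
  plus_kdv_J3_anti_integral_general v0 v1 v2 v3 v4 hden v5 hv5
end

section
/- The 5-dimensional Lotka-Volterra map φ(v₀,...,v₄) = (v₁,...,v₄,v₅), where v₅ is determined by v₃(v₀+1) = v₂(v₅+1) (i.e. v₅ = v₃(v₀+1)/v₂ - 1), preserves the function I₁ = (v₀+1)(v₁+1)(v₂+1)(v₃+1)(v₄+1)/v₂. -/
theorem lv_map_preserves_I1_general (v0 v1 v2 v3 v4 : ℝ)
    (h3 : v3 ≠ 0)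
    (v5 : ℝ) (hv5 : v5 = v3 * (v0 + 1) / v2 - 1) :
    (v1 + 1) * (v2 + 1) * (v3 + 1) * (v4 + 1) * (v5 + 1) / v3
      = (v0 + 1) * (v1 + 1) * (v2 + 1) * (v3 + 1) * (v4 + 1) / v2 := by
  rw [hv5, sub_add_cancel]
  field_simp

/-- The (3,-2) reduction of the discrete Lotka-Volterra equation preserves I₁. -/
theorem lv_map_preserves_I1 (v0 v1 v2 v3 v4 : ℝ)
    (h2 : v2 ≠ 0) (h3 : v3 ≠ 0)
    (v5 : ℝ) (hv5 : v5 = v3 * (v0 + 1) / v2 - 1) :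
    (v1 + 1) * (v2 + 1) * (v3 + 1) * (v4 + 1) * (v5 + 1) / v3
      = (v0 + 1) * (v1 + 1) * (v2 + 1) * (v3 + 1) * (v4 + 1) / v2 :=
  lv_map_preserves_I1_general v0 v1 v2 v3 v4 h3 v5 hv5
end

section
/- The 5-dimensional Lotka-Volterra map φ(v₀,...,v₄) = (v₁,...,v₄, v₃(v₀+1)/v₂ - 1) preserves the function I₂ = v₀v₃ - v₂ + v₁v₄. -/
/-- The (3,-2) reduction of the discrete Lotka-Volterra equation preserves I₂. -/
theorem lv_map_preserves_I2 (v0 v1 v2 v3 v4 : ℝ)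
    (h2 : v2 ≠ 0)
    (v5 : ℝ) (hv5 : v5 = v3 * (v0 + 1) / v2 - 1) :
    v1 * v4 - v3 + v2 * v5 = v0 * v3 - v2 + v1 * v4 := by
  have hv2v5 : v2 * v5 = v3 * (v0 + 1) - v2 := by
    rw [hv5]
    field_simp
  linear_combination hv2v5
end

section
/- For the (3,-2) reduction of the discrete Liouville equation, the map φ(v₀,...,v₄) = (v₁,...,v₄,v₅) with v₅ = v₂v₃/(1+v₀) - 1, the function C = (v₀+1)(v₂+1)(v₄+1)/((v₁+1)v₂(v₃+1)) satisfies C(φ(v)) = 1/C(v); hence I₁ = C + 1/C is an integral of φ. -/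
/-!
Writing `v₅ + 1 = v₂ v₃ / (1 + v₀)`, the factor `v₅ + 1` in `C ∘ φ` absorbs the `v₃` of the
denominator and the remaining quotient is exactly `1 / C`. Since `x ↦ x + 1 / x` is unchanged
by `x ↦ 1 / x`, the relation `C ∘ φ = 1 / C` makes `C + 1 / C` invariant.
-/

section Liouville

variable {K : Type*} [Field K]

/-- The next term `v₅` of the `(3,-2)` reduction `(1 + v₀)(1 + v₅) = v₂ v₃`. -/
def liouvilleNext (v0 v2 v3 : K) : K := v2 * v3 / (1 + v0) - 1

def liouvilleCasimir (v0 v1 v2 v3 v4 : K) : K :=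
  (v0 + 1) * (v2 + 1) * (v4 + 1) / ((v1 + 1) * v2 * (v3 + 1))

theorem liouvilleCasimir_next {v0 v3 : K} (v1 v2 v4 : K) (h3 : v3 ≠ 0) :
    liouvilleCasimir v1 v2 v3 v4 (liouvilleNext v0 v2 v3) =
      1 / liouvilleCasimir v0 v1 v2 v3 v4 := by
  unfold liouvilleCasimir liouvilleNext
  rw [one_div_div, sub_add_cancel, add_comm 1 v0]
  field_simp

end Liouville

theorem add_one_div_eq_of_eq_one_div {K : Type*} [DivisionRing K] {x y : K} (h : x = 1 / y) :
    x + 1 / x = y + 1 / y := by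
  rw [h, one_div_one_div, add_comm]

theorem liouville_casimir_two_integral_general (v0 v1 v2 v3 v4 : ℝ)
    (h3 : v3 ≠ 0)
    (v5 : ℝ) (hv5 : v5 = v2 * v3 / (1 + v0) - 1) :
    ((v1 + 1) * (v3 + 1) * (v5 + 1) / ((v2 + 1) * v3 * (v4 + 1))
        = 1 / ((v0 + 1) * (v2 + 1) * (v4 + 1) / ((v1 + 1) * v2 * (v3 + 1))))
    ∧ ((v1 + 1) * (v3 + 1) * (v5 + 1) / ((v2 + 1) * v3 * (v4 + 1))
          + 1 / ((v1 + 1) * (v3 + 1) * (v5 + 1) / ((v2 + 1) * v3 * (v4 + 1)))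
        = (v0 + 1) * (v2 + 1) * (v4 + 1) / ((v1 + 1) * v2 * (v3 + 1))
          + 1 / ((v0 + 1) * (v2 + 1) * (v4 + 1) / ((v1 + 1) * v2 * (v3 + 1)))) := by
  have key : liouvilleCasimir v1 v2 v3 v4 v5 = 1 / liouvilleCasimir v0 v1 v2 v3 v4 :=
    hv5 ▸ liouvilleCasimir_next v1 v2 v4 h3
  exact ⟨key, add_one_div_eq_of_eq_one_div key⟩

/-- For the (3,-2) Liouville reduction, C∘φ = 1/C, hence C + 1/C is an integral. -/
theorem liouville_casimir_two_integral (v0 v1 v2 v3 v4 : ℝ)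
    (h0 : v0 + 1 ≠ 0) (h1 : v1 + 1 ≠ 0) (h2 : v2 ≠ 0) (h2' : v2 + 1 ≠ 0)
    (h3 : v3 ≠ 0) (h3' : v3 + 1 ≠ 0) (h4 : v4 + 1 ≠ 0)
    (v5 : ℝ) (hv5 : v5 = v2 * v3 / (1 + v0) - 1) :
    ((v1 + 1) * (v3 + 1) * (v5 + 1) / ((v2 + 1) * v3 * (v4 + 1))
        = 1 / ((v0 + 1) * (v2 + 1) * (v4 + 1) / ((v1 + 1) * v2 * (v3 + 1))))
    ∧ ((v1 + 1) * (v3 + 1) * (v5 + 1) / ((v2 + 1) * v3 * (v4 + 1))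
          + 1 / ((v1 + 1) * (v3 + 1) * (v5 + 1) / ((v2 + 1) * v3 * (v4 + 1)))
        = (v0 + 1) * (v2 + 1) * (v4 + 1) / ((v1 + 1) * v2 * (v3 + 1))
          + 1 / ((v0 + 1) * (v2 + 1) * (v4 + 1) / ((v1 + 1) * v2 * (v3 + 1)))) :=
  liouville_casimir_two_integral_general v0 v1 v2 v3 v4 h3 v5 hv5
end

section
/- For the Liouville reduction map φ(v₀,...,v₄) = (v₁,...,v₄, v₂v₃/(1+v₀) - 1), the function B = (v₀+v₂+1)(v₁+v₃+1)/((v₀+1)(v₃+1)) is a 3-integral: B∘φ∘φ∘φ = B, with B∘φ = (v₁+v₃+1)(v₂+v₄+1)/((v₁+1)(v₄+1)) and B∘φ∘φ = (v₀+v₂+1)(v₂+v₄+1)/(v₂(v₂+1)). Consequently I₃ = B·(B∘φ)·(B∘φ∘φ) and I₄ = B + B∘φ + B∘φ∘φ are integrals of φ. -/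
/-!
Write `B(a, b, c, d) = (a + c + 1)(b + d + 1) / ((a + 1)(d + 1))`, so that `B ∘ φⁿ` is `B` evaluated
at four consecutive terms `vₙ, …, vₙ₊₃` of the recurrence `vₙ₊₅ + 1 = vₙ₊₂ vₙ₊₃ / (1 + vₙ)`.
With `t = vₙ₊₃ / (1 + vₙ)` the recurrence reads `vₙ₊₅ + 1 = vₙ₊₂ t` and
`vₙ₊₃ + vₙ₊₅ + 1 = (vₙ + vₙ₊₂ + 1) t`, so the factor `(vₙ₊₃ + vₙ₊₅ + 1) / (vₙ₊₅ + 1)` of `B ∘ φⁿ⁺²`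
collapses to `(vₙ + vₙ₊₂ + 1) / vₙ₊₂`. Applying this at `n = 0` gives `B ∘ φ²`; applying it at
`n = 1` and the factorisation of `v₃ + v₅ + 1` at `n = 0` turns `B ∘ φ³` back into `B`.
-/

section LiouvilleReduction

variable {K : Type*} [Field K]

def liouvilleB (a b c d : K) : K :=
  (a + c + 1) * (b + d + 1) / ((a + 1) * (d + 1))

variable {a b c d : K}

theorem liouville_next_add_one (hd : d = b * c / (1 + a) - 1) : d + 1 = b * (c / (1 + a)) := by
  rw [hd, mul_div_assoc, sub_add_cancel]

theorem liouville_add_next_add_one (ha : a + 1 ≠ 0) (hd : d = b * c / (1 + a) - 1) :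
    c + d + 1 = (a + b + 1) * (c / (1 + a)) := by
  have ha' : 1 + a ≠ 0 := by rwa [add_comm]
  rw [add_assoc, liouville_next_add_one hd]
  field_simp
  ring

theorem liouville_add_next_add_one_div (ha : a + 1 ≠ 0) (hc : c ≠ 0)
    (hd : d = b * c / (1 + a) - 1) :
    (c + d + 1) / (d + 1) = (a + b + 1) / b := by
  have ht : c / (1 + a) ≠ 0 := div_ne_zero hc (by rwa [add_comm])
  rw [liouville_add_next_add_one ha hd, liouville_next_add_one hd, mul_div_mul_right _ _ ht]

variable {v0 v1 v2 v3 v4 v5 v6 : K}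

theorem liouvilleB_shift_two (h0 : v0 + 1 ≠ 0) (h3 : v3 ≠ 0)
    (hv5 : v5 = v2 * v3 / (1 + v0) - 1) :
    liouvilleB v2 v3 v4 v5 = (v0 + v2 + 1) * (v2 + v4 + 1) / (v2 * (v2 + 1)) := by
  calc liouvilleB v2 v3 v4 v5 = (v2 + v4 + 1) / (v2 + 1) * ((v3 + v5 + 1) / (v5 + 1)) :=
        mul_div_mul_comm _ _ _ _
    _ = (v0 + v2 + 1) * (v2 + v4 + 1) / (v2 * (v2 + 1)) := by
        rw [liouville_add_next_add_one_div h0 h3 hv5]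
        field_simp

theorem liouvilleB_shift_three (h0 : v0 + 1 ≠ 0) (h1 : v1 + 1 ≠ 0) (h3 : v3 ≠ 0) (h4 : v4 ≠ 0)
    (hv5 : v5 = v2 * v3 / (1 + v0) - 1) (hv6 : v6 = v3 * v4 / (1 + v1) - 1) :
    liouvilleB v3 v4 v5 v6 = liouvilleB v0 v1 v2 v3 := by
  calc liouvilleB v3 v4 v5 v6 = (v3 + v5 + 1) / (v3 + 1) * ((v4 + v6 + 1) / (v6 + 1)) :=
        mul_div_mul_comm _ _ _ _
    _ = liouvilleB v0 v1 v2 v3 := by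
        rw [liouville_add_next_add_one_div h1 h4 hv6, liouville_add_next_add_one h0 hv5,
          liouvilleB, add_comm 1 v0]
        field_simp

end LiouvilleReduction

theorem liouville_B_three_integral_general (v0 v1 v2 v3 v4 : ℝ)
    (h0 : v0 + 1 ≠ 0) (h1 : v1 + 1 ≠ 0)
    (h3 : v3 ≠ 0) (h4 : v4 ≠ 0)
    (v5 v6 : ℝ)
    (hv5 : v5 = v2 * v3 / (1 + v0) - 1)
    (hv6 : v6 = v3 * v4 / (1 + v1) - 1) :
    -- B∘φ has the stated form
    ((v1 + v3 + 1) * (v2 + v4 + 1) / ((v1 + 1) * (v4 + 1))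
        = (v1 + v3 + 1) * (v2 + v4 + 1) / ((v1 + 1) * (v4 + 1)))
    -- B∘φ∘φ has the stated form
    ∧ ((v2 + v4 + 1) * (v3 + v5 + 1) / ((v2 + 1) * (v5 + 1))
        = (v0 + v2 + 1) * (v2 + v4 + 1) / (v2 * (v2 + 1)))
    -- B is a 3-integral: B∘φ∘φ∘φ = B
    ∧ ((v3 + v5 + 1) * (v4 + v6 + 1) / ((v3 + 1) * (v6 + 1))
        = (v0 + v2 + 1) * (v1 + v3 + 1) / ((v0 + 1) * (v3 + 1)))
    -- I₃ = B·(B∘φ)·(B∘φ∘φ) is an integral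
    ∧ (((v1 + v3 + 1) * (v2 + v4 + 1) / ((v1 + 1) * (v4 + 1))) *
         ((v2 + v4 + 1) * (v3 + v5 + 1) / ((v2 + 1) * (v5 + 1))) *
         ((v3 + v5 + 1) * (v4 + v6 + 1) / ((v3 + 1) * (v6 + 1)))
        = ((v0 + v2 + 1) * (v1 + v3 + 1) / ((v0 + 1) * (v3 + 1))) *
          ((v1 + v3 + 1) * (v2 + v4 + 1) / ((v1 + 1) * (v4 + 1))) *
          ((v2 + v4 + 1) * (v3 + v5 + 1) / ((v2 + 1) * (v5 + 1))))
    -- I₄ = B + B∘φ + B∘φ∘φ is an integral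
    ∧ (((v1 + v3 + 1) * (v2 + v4 + 1) / ((v1 + 1) * (v4 + 1))) +
         ((v2 + v4 + 1) * (v3 + v5 + 1) / ((v2 + 1) * (v5 + 1))) +
         ((v3 + v5 + 1) * (v4 + v6 + 1) / ((v3 + 1) * (v6 + 1)))
        = ((v0 + v2 + 1) * (v1 + v3 + 1) / ((v0 + 1) * (v3 + 1))) +
          ((v1 + v3 + 1) * (v2 + v4 + 1) / ((v1 + 1) * (v4 + 1))) +
          ((v2 + v4 + 1) * (v3 + v5 + 1) / ((v2 + 1) * (v5 + 1)))) := by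
  have period : liouvilleB v3 v4 v5 v6 = liouvilleB v0 v1 v2 v3 :=
    liouvilleB_shift_three h0 h1 h3 h4 hv5 hv6
  refine ⟨rfl, liouvilleB_shift_two h0 h3 hv5, period, ?_, ?_⟩
  · change _ * _ * liouvilleB v3 v4 v5 v6 = liouvilleB v0 v1 v2 v3 * _ * _
    rw [period]
    ring
  · change _ + _ + liouvilleB v3 v4 v5 v6 = liouvilleB v0 v1 v2 v3 + _ + _
    rw [period]
    ring

/-- For the (3,-2) Liouville reduction, B is a 3-integral: B∘φ³ = B, with the
explicit forms of B∘φ and B∘φ², and consequently both the product and the sum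
of B, B∘φ, B∘φ² are integrals of φ. -/
theorem liouville_B_three_integral (v0 v1 v2 v3 v4 : ℝ)
    (h0 : v0 + 1 ≠ 0) (h1 : v1 + 1 ≠ 0) (h2 : v2 ≠ 0) (h2' : v2 + 1 ≠ 0)
    (h3 : v3 ≠ 0) (h3' : v3 + 1 ≠ 0) (h4 : v4 ≠ 0) (h4' : v4 + 1 ≠ 0)
    (v5 v6 v7 : ℝ)
    (hv5 : v5 = v2 * v3 / (1 + v0) - 1)
    (hv6 : v6 = v3 * v4 / (1 + v1) - 1)
    (hv7 : v7 = v4 * v5 / (1 + v2) - 1) :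
    -- B∘φ has the stated form
    ((v1 + v3 + 1) * (v2 + v4 + 1) / ((v1 + 1) * (v4 + 1))
        = (v1 + v3 + 1) * (v2 + v4 + 1) / ((v1 + 1) * (v4 + 1)))
    -- B∘φ∘φ has the stated form
    ∧ ((v2 + v4 + 1) * (v3 + v5 + 1) / ((v2 + 1) * (v5 + 1))
        = (v0 + v2 + 1) * (v2 + v4 + 1) / (v2 * (v2 + 1)))
    -- B is a 3-integral: B∘φ∘φ∘φ = B
    ∧ ((v3 + v5 + 1) * (v4 + v6 + 1) / ((v3 + 1) * (v6 + 1))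
        = (v0 + v2 + 1) * (v1 + v3 + 1) / ((v0 + 1) * (v3 + 1)))
    -- I₃ = B·(B∘φ)·(B∘φ∘φ) is an integral
    ∧ (((v1 + v3 + 1) * (v2 + v4 + 1) / ((v1 + 1) * (v4 + 1))) *
         ((v2 + v4 + 1) * (v3 + v5 + 1) / ((v2 + 1) * (v5 + 1))) *
         ((v3 + v5 + 1) * (v4 + v6 + 1) / ((v3 + 1) * (v6 + 1)))
        = ((v0 + v2 + 1) * (v1 + v3 + 1) / ((v0 + 1) * (v3 + 1))) *
          ((v1 + v3 + 1) * (v2 + v4 + 1) / ((v1 + 1) * (v4 + 1))) *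
          ((v2 + v4 + 1) * (v3 + v5 + 1) / ((v2 + 1) * (v5 + 1))))
    -- I₄ = B + B∘φ + B∘φ∘φ is an integral
    ∧ (((v1 + v3 + 1) * (v2 + v4 + 1) / ((v1 + 1) * (v4 + 1))) +
         ((v2 + v4 + 1) * (v3 + v5 + 1) / ((v2 + 1) * (v5 + 1))) +
         ((v3 + v5 + 1) * (v4 + v6 + 1) / ((v3 + 1) * (v6 + 1)))
        = ((v0 + v2 + 1) * (v1 + v3 + 1) / ((v0 + 1) * (v3 + 1))) +
          ((v1 + v3 + 1) * (v2 + v4 + 1) / ((v1 + 1) * (v4 + 1))) +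
          ((v2 + v4 + 1) * (v3 + v5 + 1) / ((v2 + 1) * (v5 + 1)))) :=
  liouville_B_three_integral_general v0 v1 v2 v3 v4 h0 h1 h3 h4 v5 v6 hv5 hv6
end
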